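/- arXiv:1704.00796 — 2 statements merged into one kernel-verified Lean document; each statement's English description precedes it below -/
import Mathlib

section
/- Let F : ℝ → ℝ be C², let ξ, u : ℝ → ℝ be C¹, and define the characteristic flow x(s,t) = ξ(s) + F'(u(s))·t. Let t_s ∈ ℝ and let s₀, s*, s₁ : (t_s, ∞) → ℝ be C¹ functions such that for every t > t_s one has x(s₀(t),t) = x(s*(t),t) = x(s₁(t),t), u(s₀(t)) ≠ u(s₁(t)), and the signed area A_Dif(s₀(t), s*(t), s₁(t), t) = 0. Then for every t > t_s the common vertical line moves at the Rankine–Hugoniot speed: d/dt x(s₀(t),t) = (F(u(s₀(t))) − F(u(s₁(t)))) / (u(s₀(t)) − u(s₁(t))). -/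
open MeasureTheory Set

/-- The characteristic flow `x(s,t) = ξ(s) + F'(u(s))·t`. -/
noncomputable def charFlow (F ξ u : ℝ → ℝ) (s t : ℝ) : ℝ :=
  ξ s + deriv F (u s) * t

/-- The signed area
`A_Dif(s₀,s*,s₁,t) = ½∫_{s₀}^{s₁} (x(s,t)u'(s) − ∂_s x(s,t)·u(s)) ds
  + ½( x(s*,t)(u(s₀) − u(s₁)) + u(s*)(x(s₁,t) − x(s₀,t)) )`. -/
noncomputable def ADif (F ξ u : ℝ → ℝ) (s₀ sm s₁ t : ℝ) : ℝ :=
  (1 / 2) * (∫ s in s₀..s₁,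
      (charFlow F ξ u s t * deriv u s - deriv (fun r => charFlow F ξ u r t) s * u s))
  + (1 / 2) * (charFlow F ξ u sm t * (u s₀ - u s₁)
      + u sm * (charFlow F ξ u s₁ t - charFlow F ξ u s₀ t))

/-!
Write `g = F' ∘ u`, so that `x(s,t) = ξ(s) + g(s)·t`. The integrand of `A_Dif` has the explicit
`s`-primitive `P(s,t) = ∫₀ˢ (ξu' − ξ'u) + (2F(u(s)) − g(s)u(s))·t`, and along a curve `s = σ(t)`,
with `X = x(σ,t)` and `U = u(σ)`, one finds `d/dt P(σ(t),t) = X U' − X' U + 2F(U)`.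
While the three points stay on one vertical line `X`, the boundary terms of `A_Dif` reduce to
`½ X (U₀ − U₁)`, and differentiating shows `2 A_Dif' = 2 (X' (U₀ − U₁) − (F(U₀) − F(U₁)))`.
So `A_Dif ≡ 0` forces `X' = [F(u)] / [u]`.
-/

theorem hasDerivAt_comp_add_comp_mul {Φ h σ : ℝ → ℝ} {φ η σ' t : ℝ}
    (hΦ : HasDerivAt Φ φ (σ t)) (hh : HasDerivAt h η (σ t)) (hσ : HasDerivAt σ σ' t) :
    HasDerivAt (fun τ => Φ (σ τ) + h (σ τ) * τ) ((φ + η * t) * σ' + h (σ t)) t :=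
  ((hΦ.comp t hσ).add ((hh.comp t hσ).mul (hasDerivAt_id t))).congr_deriv (by
    simp only [Function.comp, id]
    ring)

theorem contDiff_deriv_comp {F u : ℝ → ℝ} (hF : ContDiff ℝ 2 F) (hu : ContDiff ℝ 1 u) :
    ContDiff ℝ 1 (fun s => deriv F (u s)) :=
  ((contDiff_succ_iff_deriv (n := 1)).mp (by exact_mod_cast hF)).2.2.comp hu

noncomputable def areaPotential (F ξ u : ℝ → ℝ) (s t : ℝ) : ℝ :=
  (∫ r in (0 : ℝ)..s, (ξ r * deriv u r - deriv ξ r * u r))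
    + (2 * F (u s) - deriv F (u s) * u s) * t

section CharacteristicFlow

variable {F ξ u : ℝ → ℝ}

theorem hasDerivAt_charFlow_left {s t : ℝ} (hξ : DifferentiableAt ℝ ξ s)
    (hg : DifferentiableAt ℝ (fun r => deriv F (u r)) s) :
    HasDerivAt (fun r => charFlow F ξ u r t)
      (deriv ξ s + deriv (fun r => deriv F (u r)) s * t) s :=
  hξ.hasDerivAt.add (hg.hasDerivAt.mul_const t)

theorem hasDerivAt_charFlow_comp {σ : ℝ → ℝ} {σ' t : ℝ} (hξ : DifferentiableAt ℝ ξ (σ t))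
    (hg : DifferentiableAt ℝ (fun r => deriv F (u r)) (σ t)) (hσ : HasDerivAt σ σ' t) :
    HasDerivAt (fun τ => charFlow F ξ u (σ τ) τ)
      ((deriv ξ (σ t) + deriv (fun r => deriv F (u r)) (σ t) * t) * σ' + deriv F (u (σ t))) t :=
  hasDerivAt_comp_add_comp_mul hξ.hasDerivAt hg.hasDerivAt hσ

theorem hasDerivAt_integral_wronskian (hξ : ContDiff ℝ 1 ξ) (hu : ContDiff ℝ 1 u) (s : ℝ) :
    HasDerivAt (fun s => ∫ r in (0 : ℝ)..s, (ξ r * deriv u r - deriv ξ r * u r))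
      (ξ s * deriv u s - deriv ξ s * u s) s :=
  (((hξ.continuous.mul (hu.continuous_deriv le_rfl)).sub
    ((hξ.continuous_deriv le_rfl).mul hu.continuous)).integral_hasStrictDerivAt 0 s).hasDerivAt

theorem hasDerivAt_two_mul_comp_sub_deriv_comp_mul (hF : ContDiff ℝ 2 F) (hu : ContDiff ℝ 1 u)
    (s : ℝ) :
    HasDerivAt (fun s => 2 * F (u s) - deriv F (u s) * u s)
      (deriv F (u s) * deriv u s - deriv (fun r => deriv F (u r)) s * u s) s := by
  have hFu : HasDerivAt (fun r => F (u r)) (deriv F (u s) * deriv u s) s :=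
    ((hF.differentiable two_ne_zero) (u s)).hasDerivAt.comp s
      ((hu.differentiable one_ne_zero) s).hasDerivAt
  have hgu := (((contDiff_deriv_comp hF hu).differentiable one_ne_zero) s).hasDerivAt.mul
    ((hu.differentiable one_ne_zero) s).hasDerivAt
  exact ((hFu.const_mul 2).sub hgu).congr_deriv (by ring)

theorem hasDerivAt_areaPotential_left (hF : ContDiff ℝ 2 F) (hξ : ContDiff ℝ 1 ξ)
    (hu : ContDiff ℝ 1 u) (s t : ℝ) :
    HasDerivAt (fun r => areaPotential F ξ u r t)
      (charFlow F ξ u s t * deriv u s - deriv (fun r => charFlow F ξ u r t) s * u s) s := by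
  have hg := contDiff_deriv_comp hF hu
  rw [(hasDerivAt_charFlow_left ((hξ.differentiable one_ne_zero) s)
    ((hg.differentiable one_ne_zero) s)).deriv]
  exact ((hasDerivAt_integral_wronskian hξ hu s).add
    ((hasDerivAt_two_mul_comp_sub_deriv_comp_mul hF hu s).mul_const t)).congr_deriv (by
      simp only [charFlow]
      ring)

theorem integral_eq_areaPotential_sub (hF : ContDiff ℝ 2 F) (hξ : ContDiff ℝ 1 ξ)
    (hu : ContDiff ℝ 1 u) (a b t : ℝ) :
    ∫ s in a..b, (charFlow F ξ u s t * deriv u s - deriv (fun r => charFlow F ξ u r t) s * u s)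
      = areaPotential F ξ u b t - areaPotential F ξ u a t := by
  have hg := contDiff_deriv_comp hF hu
  refine intervalIntegral.integral_eq_sub_of_hasDerivAt
    (fun s _ => hasDerivAt_areaPotential_left hF hξ hu s t) (Continuous.intervalIntegrable ?_ a b)
  have hderiv : deriv (fun r => charFlow F ξ u r t)
      = fun s => deriv ξ s + deriv (fun r => deriv F (u r)) s * t :=
    funext fun s => (hasDerivAt_charFlow_left ((hξ.differentiable one_ne_zero) s)
      ((hg.differentiable one_ne_zero) s)).deriv
  rw [hderiv]
  exact ((hξ.continuous.add (hg.continuous.mul continuous_const)).mul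
    (hu.continuous_deriv le_rfl)).sub (((hξ.continuous_deriv le_rfl).add
      ((hg.continuous_deriv le_rfl).mul continuous_const)).mul hu.continuous)

theorem ADif_eq_of_charFlow_eq (hF : ContDiff ℝ 2 F) (hξ : ContDiff ℝ 1 ξ)
    (hu : ContDiff ℝ 1 u) {a m b t : ℝ} (ham : charFlow F ξ u a t = charFlow F ξ u m t)
    (hmb : charFlow F ξ u m t = charFlow F ξ u b t) :
    2 * ADif F ξ u a m b t = areaPotential F ξ u b t - areaPotential F ξ u a t
      + charFlow F ξ u a t * (u a - u b) := by
  rw [ADif, integral_eq_areaPotential_sub hF hξ hu, ← hmb, ← ham]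
  ring

theorem hasDerivAt_areaPotential_comp (hF : ContDiff ℝ 2 F) (hξ : ContDiff ℝ 1 ξ)
    (hu : ContDiff ℝ 1 u) {σ : ℝ → ℝ} {σ' V t : ℝ} (hσ : HasDerivAt σ σ' t)
    (hV : HasDerivAt (fun τ => charFlow F ξ u (σ τ) τ) V t) :
    HasDerivAt (fun τ => areaPotential F ξ u (σ τ) τ)
      (charFlow F ξ u (σ t) t * (deriv u (σ t) * σ') - V * u (σ t) + 2 * F (u (σ t))) t := by
  have hg := contDiff_deriv_comp hF hu
  have hV' := hV.unique (hasDerivAt_charFlow_comp ((hξ.differentiable one_ne_zero) _)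
    ((hg.differentiable one_ne_zero) _) hσ)
  exact (hasDerivAt_comp_add_comp_mul (hasDerivAt_integral_wronskian hξ hu (σ t))
    (hasDerivAt_two_mul_comp_sub_deriv_comp_mul hF hu (σ t)) hσ).congr_deriv (by
      rw [hV', charFlow]
      ring)

theorem hasDerivAt_areaPotential_sub_add_charFlow_mul (hF : ContDiff ℝ 2 F) (hξ : ContDiff ℝ 1 ξ)
    (hu : ContDiff ℝ 1 u) {σ₀ σ₁ : ℝ → ℝ} {σ₀' σ₁' V t : ℝ}
    (hσ₀ : HasDerivAt σ₀ σ₀' t) (hσ₁ : HasDerivAt σ₁ σ₁' t)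
    (hX : charFlow F ξ u (σ₀ t) t = charFlow F ξ u (σ₁ t) t)
    (hV₀ : HasDerivAt (fun τ => charFlow F ξ u (σ₀ τ) τ) V t)
    (hV₁ : HasDerivAt (fun τ => charFlow F ξ u (σ₁ τ) τ) V t) :
    HasDerivAt (fun τ => areaPotential F ξ u (σ₁ τ) τ - areaPotential F ξ u (σ₀ τ) τ
        + charFlow F ξ u (σ₀ τ) τ * (u (σ₀ τ) - u (σ₁ τ)))
      (2 * (V * (u (σ₀ t) - u (σ₁ t)) - (F (u (σ₀ t)) - F (u (σ₁ t))))) t := by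
  have hU : ∀ {σ : ℝ → ℝ} {σ'}, HasDerivAt σ σ' t →
      HasDerivAt (fun τ => u (σ τ)) (deriv u (σ t) * σ') t :=
    fun hσ => ((hu.differentiable one_ne_zero) _).hasDerivAt.comp t hσ
  exact (((hasDerivAt_areaPotential_comp hF hξ hu hσ₁ hV₁).sub
    (hasDerivAt_areaPotential_comp hF hξ hu hσ₀ hV₀)).add
      (hV₀.mul ((hU hσ₀).sub (hU hσ₁)))).congr_deriv (by
    rw [hX, Pi.sub_apply]
    ring)

end CharacteristicFlow

theorem equal_area_implies_rankine_hugoniot_general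
    (F ξ u : ℝ → ℝ) (hF : ContDiff ℝ 2 F) (hξ : ContDiff ℝ 1 ξ) (hu : ContDiff ℝ 1 u)
    (ts : ℝ) (s₀ sm s₁ : ℝ → ℝ)
    (hs₀ : ContDiffOn ℝ 1 s₀ (Ioi ts))
    (hs₁ : ContDiffOn ℝ 1 s₁ (Ioi ts))
    (hline : ∀ t ∈ Ioi ts, charFlow F ξ u (s₀ t) t = charFlow F ξ u (sm t) t ∧
      charFlow F ξ u (sm t) t = charFlow F ξ u (s₁ t) t)
    (hne : ∀ t ∈ Ioi ts, u (s₀ t) ≠ u (s₁ t))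
    (hA : ∀ t ∈ Ioi ts, ADif F ξ u (s₀ t) (sm t) (s₁ t) t = 0) :
    ∀ t ∈ Ioi ts, HasDerivAt (fun τ => charFlow F ξ u (s₀ τ) τ)
      ((F (u (s₀ t)) - F (u (s₁ t))) / (u (s₀ t) - u (s₁ t))) t := by
  intro t ht
  have hnhds : Ioi ts ∈ nhds t := isOpen_Ioi.mem_nhds ht
  have hσ₀ := ((hs₀.contDiffAt hnhds).differentiableAt one_ne_zero).hasDerivAt
  have hσ₁ := ((hs₁.contDiffAt hnhds).differentiableAt one_ne_zero).hasDerivAt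
  obtain ⟨V, hV₀⟩ : ∃ V, HasDerivAt (fun τ => charFlow F ξ u (s₀ τ) τ) V t :=
    ⟨_, hasDerivAt_charFlow_comp ((hξ.differentiable one_ne_zero) _)
      (((contDiff_deriv_comp hF hu).differentiable one_ne_zero) _) hσ₀⟩
  have hV₁ : HasDerivAt (fun τ => charFlow F ξ u (s₁ τ) τ) V t :=
    hV₀.congr_of_eventuallyEq (Filter.eventuallyEq_of_mem hnhds fun τ hτ =>
      ((hline τ hτ).1.trans (hline τ hτ).2).symm)
  have hdefect := hasDerivAt_areaPotential_sub_add_charFlow_mul hF hξ hu hσ₀ hσ₁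
    ((hline t ht).1.trans (hline t ht).2) hV₀ hV₁
  have hzero : HasDerivAt (fun τ => areaPotential F ξ u (s₁ τ) τ
      - areaPotential F ξ u (s₀ τ) τ + charFlow F ξ u (s₀ τ) τ * (u (s₀ τ) - u (s₁ τ))) 0 t :=
    (hasDerivAt_const t 0).congr_of_eventuallyEq (Filter.eventuallyEq_of_mem hnhds fun τ hτ => by
      rw [← ADif_eq_of_charFlow_eq hF hξ hu (hline τ hτ).1 (hline τ hτ).2, hA τ hτ, mul_zero])
  have hV : V * (u (s₀ t) - u (s₁ t)) = F (u (s₀ t)) - F (u (s₁ t)) := by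
    linear_combination (hdefect.unique hzero) / 2
  rwa [← hV, mul_div_cancel_right₀ _ (sub_ne_zero.mpr (hne t ht))]

/-- If the three parameter curves track a common vertical line with zero signed area
for all `t > t_s`, then that vertical line moves at the Rankine–Hugoniot speed. -/
theorem equal_area_implies_rankine_hugoniot
    (F ξ u : ℝ → ℝ) (hF : ContDiff ℝ 2 F) (hξ : ContDiff ℝ 1 ξ) (hu : ContDiff ℝ 1 u)
    (ts : ℝ) (s₀ sm s₁ : ℝ → ℝ)
    (hs₀ : ContDiffOn ℝ 1 s₀ (Ioi ts)) (hsm : ContDiffOn ℝ 1 sm (Ioi ts))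
    (hs₁ : ContDiffOn ℝ 1 s₁ (Ioi ts))
    (hline : ∀ t ∈ Ioi ts, charFlow F ξ u (s₀ t) t = charFlow F ξ u (sm t) t ∧
      charFlow F ξ u (sm t) t = charFlow F ξ u (s₁ t) t)
    (hne : ∀ t ∈ Ioi ts, u (s₀ t) ≠ u (s₁ t))
    (hA : ∀ t ∈ Ioi ts, ADif F ξ u (s₀ t) (sm t) (s₁ t) t = 0) :
    ∀ t ∈ Ioi ts, HasDerivAt (fun τ => charFlow F ξ u (s₀ τ) τ)
      ((F (u (s₀ t)) - F (u (s₁ t))) / (u (s₀ t) - u (s₁ t))) t :=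
  equal_area_implies_rankine_hugoniot_general F ξ u hF hξ hu ts s₀ sm s₁ hs₀ hs₁ hline hne hA
end

section
/- Let F : ℝ → ℝ be C², let ξ, u : ℝ → ℝ be C¹, and define the characteristic flow x(s,t) = ξ(s) + F'(u(s))·t. Let t₀ ∈ ℝ and let s₀, s*, s₁ : [t₀, ∞) → ℝ be C¹ functions such that for every t ≥ t₀ one has x(s₀(t),t) = x(s*(t),t) = x(s₁(t),t), u(s₀(t)) ≠ u(s₁(t)), and the line moves at Rankine–Hugoniot speed: d/dt x(s₀(t),t) = (F(u(s₀(t))) − F(u(s₁(t)))) / (u(s₀(t)) − u(s₁(t))). If the signed area satisfies A_Dif(s₀(t₀), s*(t₀), s₁(t₀), t₀) = 0, then A_Dif(s₀(t), s*(t), s₁(t), t) = 0 for all t ≥ t₀. -/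
open MeasureTheory Set

/-! Along the characteristics the integrand `x u' - ∂ₛx u` equals
`(ξ u' - ξ' u) + t ∂ₛ(2F(u) - F'(u) u)`, affine in `t`, so the Leibniz rule gives the time
derivative of the area in closed form: `[x dU/dt - U dX/dt + 2F(U)]` between the two endpoints.
On the common vertical line the `s*`-terms vanish, both endpoints move with the line's speed `σ`,
and the derivative collapses to `2σ(U₀ - U₁) - 2(F(U₀) - F(U₁))`, which is zero exactly by the
Rankine–Hugoniot condition. -/

theorem Continuous.hasDerivWithinAt_intervalIntegral {f a c : ℝ → ℝ} {a' c' t : ℝ}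
    {S : Set ℝ} (hf : Continuous f) (ha : HasDerivWithinAt a a' S t)
    (hc : HasDerivWithinAt c c' S t) :
    HasDerivWithinAt (fun τ => ∫ s in a τ..c τ, f s) (f (c t) * c' - f (a t) * a') S t := by
  have hprimitive (x : ℝ) := (hf.integral_hasStrictDerivAt 0 x).hasDerivAt
  have hsplit (τ : ℝ) : ∫ s in a τ..c τ, f s = (∫ s in 0..c τ, f s) - ∫ s in 0..a τ, f s :=
    (intervalIntegral.integral_interval_sub_left (hf.intervalIntegrable _ _)
      (hf.intervalIntegrable _ _)).symm
  simp only [hsplit]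
  exact ((hprimitive (c t)).comp_hasDerivWithinAt t hc).sub
    ((hprimitive (a t)).comp_hasDerivWithinAt t ha)

theorem Continuous.hasDerivWithinAt_intervalIntegral_add_mul {f g a c : ℝ → ℝ} {a' c' t : ℝ}
    {S : Set ℝ} (hf : Continuous f) (hg : Continuous g) (ha : HasDerivWithinAt a a' S t)
    (hc : HasDerivWithinAt c c' S t) :
    HasDerivWithinAt (fun τ => ∫ s in a τ..c τ, f s + τ * g s)
      ((f (c t) + t * g (c t)) * c' - (f (a t) + t * g (a t)) * a' + ∫ s in a t..c t, g s)
      S t := by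
  have hsplit (τ : ℝ) :
      ∫ s in a τ..c τ, f s + τ * g s = (∫ s in a τ..c τ, f s) + τ * ∫ s in a τ..c τ, g s := by
    rw [intervalIntegral.integral_add (hf.intervalIntegrable _ _)
      ((show Continuous fun s => τ * g s by fun_prop).intervalIntegrable _ _),
      intervalIntegral.integral_const_mul]
  simp only [hsplit]
  refine ((hf.hasDerivWithinAt_intervalIntegral ha hc).fun_add ((hasDerivWithinAt_id t S).fun_mul
    (hg.hasDerivWithinAt_intervalIntegral ha hc))).congr_deriv ?_
  simp only [id]
  ring

section CharacteristicFlow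

variable {F ξ u : ℝ → ℝ}

theorem hasDerivAt_charFlow_fst (hξ : Differentiable ℝ ξ) (hu : Differentiable ℝ u)
    (hF : Differentiable ℝ (deriv F)) (s t : ℝ) :
    HasDerivAt (fun r => charFlow F ξ u r t)
      (deriv ξ s + deriv (deriv F) (u s) * deriv u s * t) s :=
  (hξ s).hasDerivAt.fun_add (((hF (u s)).hasDerivAt.comp s (hu s).hasDerivAt).mul_const t)

theorem HasDerivWithinAt.charFlow_comp (hξ : Differentiable ℝ ξ) (hu : Differentiable ℝ u)
    (hF : Differentiable ℝ (deriv F)) {f : ℝ → ℝ} {f' t : ℝ} {S : Set ℝ}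
    (hf : HasDerivWithinAt f f' S t) :
    HasDerivWithinAt (fun τ => charFlow F ξ u (f τ) τ)
      (deriv (fun r => charFlow F ξ u r t) (f t) * f' + deriv F (u (f t))) S t := by
  rw [(hasDerivAt_charFlow_fst hξ hu hF (f t) t).deriv]
  have huf : HasDerivWithinAt (fun τ => u (f τ)) (deriv u (f t) * f') S t :=
    (hu (f t)).hasDerivAt.comp_hasDerivWithinAt t hf
  refine (((hξ (f t)).hasDerivAt.comp_hasDerivWithinAt t hf).fun_add
    (((hF (u (f t))).hasDerivAt.comp_hasDerivWithinAt t huf).fun_mul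
      (hasDerivWithinAt_id t S))).congr_deriv ?_
  simp only [id, Function.comp_apply]
  ring

noncomputable def areaIntegrand (F ξ u : ℝ → ℝ) (s t : ℝ) : ℝ :=
  charFlow F ξ u s t * deriv u s - deriv (fun r => charFlow F ξ u r t) s * u s

theorem areaIntegrand_eq (hF : ContDiff ℝ 2 F) (hξ : Differentiable ℝ ξ)
    (hu : Differentiable ℝ u) (s t : ℝ) :
    areaIntegrand F ξ u s t = (ξ s * deriv u s - deriv ξ s * u s)
      + t * deriv (fun r => 2 * F (u r) - deriv F (u r) * u r) s := by
  have hF' : Differentiable ℝ (deriv F) := (hF.deriv' (n := 1)).differentiable one_ne_zero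
  have hFu : HasDerivAt (fun r => F (u r)) (deriv F (u s) * deriv u s) s :=
    ((hF.differentiable two_ne_zero) (u s)).hasDerivAt.comp s (hu s).hasDerivAt
  have hF'u : HasDerivAt (fun r => deriv F (u r)) (deriv (deriv F) (u s) * deriv u s) s :=
    (hF' (u s)).hasDerivAt.comp s (hu s).hasDerivAt
  rw [areaIntegrand, (hasDerivAt_charFlow_fst hξ hu hF' s t).deriv,
    ((hFu.const_mul 2).fun_sub (hF'u.fun_mul (hu s).hasDerivAt)).deriv, charFlow]
  ring

theorem hasDerivWithinAt_intervalIntegral_areaIntegrand (hF : ContDiff ℝ 2 F)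
    (hξ : ContDiff ℝ 1 ξ) (hu : ContDiff ℝ 1 u) {a c : ℝ → ℝ} {a' c' t : ℝ} {S : Set ℝ}
    (ha : HasDerivWithinAt a a' S t) (hc : HasDerivWithinAt c c' S t) :
    HasDerivWithinAt (fun τ => ∫ s in a τ..c τ, areaIntegrand F ξ u s τ)
      (areaIntegrand F ξ u (c t) t * c' - areaIntegrand F ξ u (a t) t * a'
        + ((2 * F (u (c t)) - deriv F (u (c t)) * u (c t))
          - (2 * F (u (a t)) - deriv F (u (a t)) * u (a t)))) S t := by
  have hW : ContDiff ℝ 1 fun r => 2 * F (u r) - deriv F (u r) * u r :=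
    ((contDiff_const.mul ((hF.of_le one_le_two).comp hu)).sub
      ((hF.deriv' (n := 1)).comp hu |>.mul hu))
  have hP : Continuous fun s => ξ s * deriv u s - deriv ξ s * u s :=
    (hξ.continuous.mul (hu.continuous_deriv le_rfl)).sub
      ((hξ.continuous_deriv le_rfl).mul hu.continuous)
  have hleibniz := hP.hasDerivWithinAt_intervalIntegral_add_mul (hW.continuous_deriv le_rfl) ha hc
  rw [intervalIntegral.integral_deriv_eq_sub (fun x _ => hW.differentiable one_ne_zero x)
    ((hW.continuous_deriv le_rfl).intervalIntegrable _ _)] at hleibniz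
  simpa only [← areaIntegrand_eq hF (hξ.differentiable one_ne_zero)
    (hu.differentiable one_ne_zero)] using hleibniz

/-- `ADif` once `x(s₀,t) = x(s*,t) = x(s₁,t)`, where `s*` drops out. -/
noncomputable def lineArea (F ξ u : ℝ → ℝ) (s₀ s₁ t : ℝ) : ℝ :=
  (1 / 2) * (∫ s in s₀..s₁, areaIntegrand F ξ u s t)
    + (1 / 2) * (charFlow F ξ u s₀ t * (u s₀ - u s₁))

theorem ADif_eq_lineArea {s₀ sm s₁ t : ℝ} (h₀ : charFlow F ξ u s₀ t = charFlow F ξ u sm t)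
    (h₁ : charFlow F ξ u sm t = charFlow F ξ u s₁ t) :
    ADif F ξ u s₀ sm s₁ t = lineArea F ξ u s₀ s₁ t := by
  rw [ADif, ← h₁, ← h₀, sub_self, mul_zero, add_zero]
  rfl

theorem hasDerivWithinAt_lineArea_zero (hF : ContDiff ℝ 2 F) (hξ : ContDiff ℝ 1 ξ)
    (hu : ContDiff ℝ 1 u) {a c : ℝ → ℝ} {a' c' σ t : ℝ} {S : Set ℝ}
    (hS : UniqueDiffWithinAt ℝ S t) (ha : HasDerivWithinAt a a' S t)
    (hc : HasDerivWithinAt c c' S t)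
    (hXa : HasDerivWithinAt (fun τ => charFlow F ξ u (a τ) τ) σ S t)
    (hXc : HasDerivWithinAt (fun τ => charFlow F ξ u (c τ) τ) σ S t)
    (hline : charFlow F ξ u (a t) t = charFlow F ξ u (c t) t)
    (hσ : σ * (u (a t) - u (c t)) = F (u (a t)) - F (u (c t))) :
    HasDerivWithinAt (fun τ => lineArea F ξ u (a τ) (c τ) τ) 0 S t := by
  have hξ' := hξ.differentiable one_ne_zero
  have hu' := hu.differentiable one_ne_zero
  have hF' := (hF.deriv' (n := 1)).differentiable one_ne_zero
  have hva := hS.eq_deriv _ (ha.charFlow_comp hξ' hu' hF') hXa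
  have hvc := hS.eq_deriv _ (hc.charFlow_comp hξ' hu' hF') hXc
  have hUa := (hu' (a t)).hasDerivAt.comp_hasDerivWithinAt t ha
  have hUc := (hu' (c t)).hasDerivAt.comp_hasDerivWithinAt t hc
  have hI := hasDerivWithinAt_intervalIntegral_areaIntegrand hF hξ hu ha hc
  refine ((hI.const_mul (1 / 2)).fun_add
    ((hXa.fun_mul (hUa.fun_sub hUc)).const_mul (1 / 2))).congr_deriv ?_
  simp only [areaIntegrand, Function.comp_apply]
  linear_combination (1 / 2) * u (a t) * hva - (1 / 2) * u (c t) * hvc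
    - (1 / 2) * (deriv u (c t) * c') * hline + hσ

end CharacteristicFlow

theorem rankine_hugoniot_implies_equal_area_general
    (F ξ u : ℝ → ℝ) (hF : ContDiff ℝ 2 F) (hξ : ContDiff ℝ 1 ξ) (hu : ContDiff ℝ 1 u)
    (t₀ : ℝ) (s₀ sm s₁ : ℝ → ℝ)
    (hs₀ : ContDiffOn ℝ 1 s₀ (Ici t₀))
    (hs₁ : ContDiffOn ℝ 1 s₁ (Ici t₀))
    (hline : ∀ t ∈ Ici t₀, charFlow F ξ u (s₀ t) t = charFlow F ξ u (sm t) t ∧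
      charFlow F ξ u (sm t) t = charFlow F ξ u (s₁ t) t)
    (hne : ∀ t ∈ Ici t₀, u (s₀ t) ≠ u (s₁ t))
    (hRH : ∀ t ∈ Ici t₀, HasDerivAt (fun τ => charFlow F ξ u (s₀ τ) τ)
      ((F (u (s₀ t)) - F (u (s₁ t))) / (u (s₀ t) - u (s₁ t))) t)
    (hA₀ : ADif F ξ u (s₀ t₀) (sm t₀) (s₁ t₀) t₀ = 0) :
    ∀ t ∈ Ici t₀, ADif F ξ u (s₀ t) (sm t) (s₁ t) t = 0 := by
  set A : ℝ → ℝ := fun τ => lineArea F ξ u (s₀ τ) (s₁ τ) τ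
  have hADif : ∀ τ ∈ Ici t₀, ADif F ξ u (s₀ τ) (sm τ) (s₁ τ) τ = A τ := fun τ hτ =>
    ADif_eq_lineArea (hline τ hτ).1 (hline τ hτ).2
  have hends : ∀ τ ∈ Ici t₀, charFlow F ξ u (s₀ τ) τ = charFlow F ξ u (s₁ τ) τ :=
    fun τ hτ => (hline τ hτ).1.trans (hline τ hτ).2
  have hA' : ∀ τ ∈ Ici t₀, HasDerivWithinAt A 0 (Ici t₀) τ := by
    intro τ hτ
    have hX₀ := (hRH τ hτ).hasDerivWithinAt (s := Ici t₀)
    have hX₁ := hX₀.congr_of_mem (fun r hr => (hends r hr).symm) hτ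
    exact hasDerivWithinAt_lineArea_zero hF hξ hu (uniqueDiffOn_Ici t₀ τ hτ)
      (hs₀.differentiableOn one_ne_zero τ hτ).hasDerivWithinAt
      (hs₁.differentiableOn one_ne_zero τ hτ).hasDerivWithinAt hX₀ hX₁ (hends τ hτ)
      (div_mul_cancel₀ _ (sub_ne_zero.mpr (hne τ hτ)))
  intro t ht
  have hA_const := constant_of_has_deriv_right_zero (a := t₀) (b := t)
    (fun x hx => ((hA' x hx.1).continuousWithinAt).mono Icc_subset_Ici_self)
    (fun x hx => (hA' x hx.1).mono (Ici_subset_Ici.mpr hx.1))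
  rw [hADif t ht, hA_const t ⟨ht, le_rfl⟩, ← hADif t₀ self_mem_Ici, hA₀]

/-- If the common vertical line moves at Rankine–Hugoniot speed for all `t ≥ t₀`
and the signed area vanishes initially, then it vanishes for all `t ≥ t₀`. -/
theorem rankine_hugoniot_implies_equal_area
    (F ξ u : ℝ → ℝ) (hF : ContDiff ℝ 2 F) (hξ : ContDiff ℝ 1 ξ) (hu : ContDiff ℝ 1 u)
    (t₀ : ℝ) (s₀ sm s₁ : ℝ → ℝ)
    (hs₀ : ContDiffOn ℝ 1 s₀ (Ici t₀)) (hsm : ContDiffOn ℝ 1 sm (Ici t₀))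
    (hs₁ : ContDiffOn ℝ 1 s₁ (Ici t₀))
    (hline : ∀ t ∈ Ici t₀, charFlow F ξ u (s₀ t) t = charFlow F ξ u (sm t) t ∧
      charFlow F ξ u (sm t) t = charFlow F ξ u (s₁ t) t)
    (hne : ∀ t ∈ Ici t₀, u (s₀ t) ≠ u (s₁ t))
    (hRH : ∀ t ∈ Ici t₀, HasDerivAt (fun τ => charFlow F ξ u (s₀ τ) τ)
      ((F (u (s₀ t)) - F (u (s₁ t))) / (u (s₀ t) - u (s₁ t))) t)
    (hA₀ : ADif F ξ u (s₀ t₀) (sm t₀) (s₁ t₀) t₀ = 0) :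
    ∀ t ∈ Ici t₀, ADif F ξ u (s₀ t) (sm t) (s₁ t) t = 0 :=
  rankine_hugoniot_implies_equal_area_general F ξ u hF hξ hu t₀ s₀ sm s₁ hs₀ hs₁ hline hne hRH hA₀
end
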